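/- arXiv:2011.14209 — 2 statements merged into one kernel-verified Lean document; each statement's English description precedes it below -/
import Mathlib

section
/- Fix N ≥ 1, let w̃ be a filter on ZMod N, and let w = w̃ ⋆ w̃ be the associated double convolution filter. Then for every natural number p ≥ 1 and every s : ZMod N → ℂ, the iterates of the fluctuation operator satisfy ‖𝒱_w^{p+1} s − 𝒱_w^p s‖₂ ≤ ‖s‖₂ / (e · p), where ‖t‖₂ = sqrt(Σ_g |t(g)|²) and e = exp(1). -/
open Finset

/-- The fluctuation operator `𝒱_w s = s − w ⋆ s` on `ZMod N`, for a real-valued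
`w` acting on a complex signal `s`. -/
noncomputable def fluctuation {N : ℕ} [NeZero N] (w : ZMod N → ℝ) (s : ZMod N → ℂ) :
    ZMod N → ℂ :=
  fun g => s g - ∑ h : ZMod N, (w (g - h) : ℂ) * s h

/-- The Euclidean norm `‖t‖₂ = sqrt(Σ_g |t(g)|²)` on `ZMod N → ℂ`. -/
noncomputable def l2norm {N : ℕ} [NeZero N] (t : ZMod N → ℂ) : ℝ :=
  Real.sqrt (∑ g : ZMod N, ‖t g‖ ^ 2)

/-!
Convolution by `w̃` is a self-adjoint contraction `T` of `ℓ²(ZMod N)` (by evenness of `w̃` and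
because it averages translates), and `𝒱_w = 1 - T²`. Hence `𝒱_w^{p+1} - 𝒱_w^p = -T²(1 - T²)^p`,
whose norm is, by the continuous functional calculus, at most the supremum of `x²(1 - x²)^p`
over `σ(T) ⊆ [-1, 1]`; and `λ(1 - λ)^p ≤ λ e^{-pλ} ≤ 1/(e p)`.
-/

open Matrix Real

theorem mul_one_sub_pow_le_inv_exp_mul {l : ℝ} (hl1 : l ≤ 1) {p : ℕ} (hp : 0 < p) :
    l * (1 - l) ^ p ≤ (exp 1 * p)⁻¹ := by
  have hdecay : (1 - l) ^ p ≤ exp (-(p * l)) := by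
    calc (1 - l) ^ p ≤ exp (-l) ^ p := pow_le_pow_left₀ (by linarith) (one_sub_le_exp_neg l) p
      _ = exp (-(p * l)) := by rw [← exp_nat_mul]; ring_nf
  have hpeak : p * l ≤ exp (p * l - 1) := by linarith [add_one_le_exp (p * l - 1)]
  rw [← one_div, le_div_iff₀ (by positivity)]
  calc l * (1 - l) ^ p * (exp 1 * p) = exp 1 * (p * l) * (1 - l) ^ p := by ring
    _ ≤ exp 1 * exp (p * l - 1) * exp (-(p * l)) := by gcongr
    _ = 1 := by rw [← exp_add, ← exp_add]; ring_nf; exact exp_zero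

theorem IsSelfAdjoint.norm_sq_mul_one_sub_sq_pow_le {A : Type*} [CStarAlgebra A] {a : A}
    (ha : IsSelfAdjoint a) (ha1 : ‖a‖ ≤ 1) {p : ℕ} (hp : 0 < p) :
    ‖a ^ 2 * (1 - a ^ 2) ^ p‖ ≤ (Real.exp 1 * p)⁻¹ := by
  obtain _ | _ := subsingleton_or_nontrivial A
  · rw [Subsingleton.elim (a ^ 2 * (1 - a ^ 2) ^ p) 0, norm_zero]
    positivity
  have hcfc : a ^ 2 * (1 - a ^ 2) ^ p = cfc (fun x : ℝ => x ^ 2 * (1 - x ^ 2) ^ p) a := by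
    rw [cfc_mul .., cfc_pow (fun x => 1 - x ^ 2) .., cfc_sub .., cfc_const_one .., cfc_pow ..,
      cfc_id' ..]
  rw [hcfc]
  refine norm_cfc_le (by positivity) fun x hx => ?_
  have hx1 : x ^ 2 ≤ 1 := by
    rw [sq_le_one_iff_abs_le_one]
    exact (spectrum.norm_le_norm_of_mem hx).trans ha1
  rw [Real.norm_of_nonneg (by have := sub_nonneg.2 hx1; positivity)]
  exact mul_one_sub_pow_le_inv_exp_mul hx1 hp

section Convolution

variable (𝕜 : Type*) {G : Type*} [RCLike 𝕜] [AddCommGroup G] [Fintype G] [DecidableEq G]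

noncomputable def convolutionCLM (k : G → ℝ) : EuclideanSpace 𝕜 G →L[𝕜] EuclideanSpace 𝕜 G :=
  toEuclideanCLM (𝕜 := 𝕜) (n := G) (circulant fun g => (k g : 𝕜))

variable {𝕜}

theorem isSelfAdjoint_convolutionCLM {k : G → ℝ} (hk : ∀ g, k (-g) = k g) :
    IsSelfAdjoint (convolutionCLM 𝕜 k) := by
  refine IsSelfAdjoint.map ?_ toEuclideanCLM
  rw [IsSelfAdjoint, star_eq_conjTranspose, conjTranspose_circulant]
  congr 1
  ext g
  simp [hk]

theorem convolutionCLM_eq_sum_smul_translate (k : G → ℝ) (x : EuclideanSpace 𝕜 G) :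
    convolutionCLM 𝕜 k x =
      ∑ h, (k h : 𝕜) • LinearIsometryEquiv.piLpCongrLeft 2 𝕜 𝕜 (Equiv.addRight h) x := by
  ext g
  simp only [convolutionCLM, ofLp_toEuclideanCLM, mulVec, dotProduct, circulant_apply,
    WithLp.ofLp_sum, WithLp.ofLp_smul, LinearIsometryEquiv.piLpCongrLeft_apply,
    Equiv.piCongrLeft', Equiv.addRight_symm, Equiv.coe_addRight, Equiv.coe_fn_mk,
    Finset.sum_apply, Pi.smul_apply, smul_eq_mul]
  exact Fintype.sum_equiv (Equiv.subLeft g) _ _ fun i => by simp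

theorem norm_convolutionCLM_le_one {k : G → ℝ} (hk0 : ∀ g, 0 ≤ k g) (hk1 : ∑ g, k g = 1) :
    ‖convolutionCLM 𝕜 k‖ ≤ 1 := by
  refine ContinuousLinearMap.opNorm_le_bound _ zero_le_one fun x => ?_
  calc _ = ‖∑ h, (k h : 𝕜) • LinearIsometryEquiv.piLpCongrLeft 2 𝕜 𝕜 (Equiv.addRight h) x‖ := by
        rw [convolutionCLM_eq_sum_smul_translate]
    _ ≤ ∑ h, ‖(k h : 𝕜) • LinearIsometryEquiv.piLpCongrLeft 2 𝕜 𝕜 (Equiv.addRight h) x‖ :=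
        norm_sum_le _ _
    _ = 1 * ‖x‖ := by simp [norm_smul, abs_of_nonneg (hk0 _), ← Finset.sum_mul, hk1]

end Convolution

section Fluctuation

variable {N : ℕ} [NeZero N]

theorem l2norm_eq_norm_toLp (t : ZMod N → ℂ) :
    l2norm t = ‖(WithLp.toLp 2 t : EuclideanSpace ℂ (ZMod N))‖ := by
  rw [l2norm, EuclideanSpace.norm_eq]

theorem toLp_fluctuation (w : ZMod N → ℝ) (t : ZMod N → ℂ) :
    WithLp.toLp 2 (fluctuation w t) = (1 - convolutionCLM ℂ w) (WithLp.toLp 2 t) := by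
  ext g
  simp [fluctuation, convolutionCLM, mulVec, dotProduct]

theorem convolutionCLM_eq_sq {wt w : ZMod N → ℝ}
    (hw : ∀ g, w g = ∑ h : ZMod N, wt (g - h) * wt h) :
    convolutionCLM ℂ w = convolutionCLM ℂ wt ^ 2 := by
  rw [convolutionCLM, convolutionCLM, sq, ← map_mul, circulant_mul]
  congr 2
  ext g
  simp [hw, mulVec, dotProduct]

theorem toLp_fluctuation_iterate {wt w : ZMod N → ℝ}
    (hw : ∀ g, w g = ∑ h : ZMod N, wt (g - h) * wt h) (n : ℕ) (t : ZMod N → ℂ) :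
    WithLp.toLp 2 ((fluctuation w)^[n] t) =
      ((1 - convolutionCLM ℂ wt ^ 2) ^ n : EuclideanSpace ℂ (ZMod N) →L[ℂ] _)
        (WithLp.toLp 2 t) := by
  have hstep : Function.Semiconj (WithLp.toLp 2) (fluctuation w)
      (1 - convolutionCLM ℂ wt ^ 2 : EuclideanSpace ℂ (ZMod N) →L[ℂ] _) := fun t => by
    rw [toLp_fluctuation, convolutionCLM_eq_sq hw]
  rw [(hstep.iterate_right n).eq, FunLike.coe_pow_eq_iterate]

end Fluctuation

theorem fluctuation_iterate_diff_norm_general (N : ℕ) [NeZero N]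
    (wt : ZMod N → ℝ)
    (hw0 : ∀ g, 0 ≤ wt g) (hwe : ∀ g, wt (-g) = wt g) (hw1 : ∑ g : ZMod N, wt g = 1)
    (w : ZMod N → ℝ) (hw : ∀ g, w g = ∑ h : ZMod N, wt (g - h) * wt h)
    (p : ℕ) (hp : 1 ≤ p) (s : ZMod N → ℂ) :
    l2norm (fun g => (fluctuation w)^[p + 1] s g - (fluctuation w)^[p] s g) ≤
      l2norm s / (Real.exp 1 * p) := by
  set T := convolutionCLM ℂ wt
  have hdiff : WithLp.toLp 2 (fun g => (fluctuation w)^[p + 1] s g - (fluctuation w)^[p] s g) =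
      -(T ^ 2 * (1 - T ^ 2) ^ p : EuclideanSpace ℂ (ZMod N) →L[ℂ] _) (WithLp.toLp 2 s) := by
    rw [← Pi.sub_def, WithLp.toLp_sub, toLp_fluctuation_iterate hw, toLp_fluctuation_iterate hw,
      pow_succ', sub_mul, one_mul, _root_.sub_apply, sub_sub_cancel_left]
  have hT : ‖T ^ 2 * (1 - T ^ 2) ^ p‖ ≤ (Real.exp 1 * p)⁻¹ :=
    (isSelfAdjoint_convolutionCLM hwe).norm_sq_mul_one_sub_sq_pow_le
      (norm_convolutionCLM_le_one hw0 hw1) hp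
  rw [l2norm_eq_norm_toLp, l2norm_eq_norm_toLp, hdiff, norm_neg, div_eq_inv_mul]
  exact ContinuousLinearMap.le_of_opNorm_le _ hT _

/-- For a double convolution filter `w = w̃ ⋆ w̃` on `ZMod N`,
consecutive iterates of the fluctuation operator satisfy
`‖𝒱_w^{p+1} s − 𝒱_w^p s‖₂ ≤ ‖s‖₂/(e·p)`. -/
theorem fluctuation_iterate_diff_norm (N : ℕ) [NeZero N] (hN : 1 ≤ N)
    (wt : ZMod N → ℝ)
    (hw0 : ∀ g, 0 ≤ wt g) (hwe : ∀ g, wt (-g) = wt g) (hw1 : ∑ g : ZMod N, wt g = 1)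
    (w : ZMod N → ℝ) (hw : ∀ g, w g = ∑ h : ZMod N, wt (g - h) * wt h)
    (p : ℕ) (hp : 1 ≤ p) (s : ZMod N → ℂ) :
    l2norm (fun g => (fluctuation w)^[p + 1] s g - (fluctuation w)^[p] s g) ≤
      l2norm s / (Real.exp 1 * p) :=
  fluctuation_iterate_diff_norm_general N wt hw0 hwe hw1 w hw p hp s
end

section
/- Fix N ≥ 1, let w̃ be a filter on ZMod N, and let w = w̃ ⋆ w̃ be the associated double convolution filter. Define P : (ZMod N → ℂ) → (ZMod N → ℂ) as the unique linear map such that for every s and every character index k, (ℱ(P s))(k) = (ℱs)(k) if (ℱw)(k) = 0 and (ℱ(P s))(k) = 0 otherwise. Then for every s : ZMod N → ℂ, the sequence of iterates 𝒱_w^p s converges to P s as p → ∞ (in the Euclidean norm on ZMod N → ℂ). -/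
/-!
On the Fourier side `𝒱_w` is multiplication by `1 - ℱw`. Since `w̃` is real, even and of total
mass one, `ℱw̃` is real with `|ℱw̃| ≤ 1`, so `ℱw = (ℱw̃)²` lies in `[0, 1]`. Hence `(1 - ℱw)ᵖ`
is `1` at the frequencies where `ℱw` vanishes and tends to `0` at all others, i.e. `ℱ(𝒱_wᵖ s)`
tends to `ℱ(P s)`; convergence on the Fourier side is convergence in norm, as `ℱ` is a linear
automorphism of a finite-dimensional space.
-/

open Finset Filter

/-- The discrete Fourier transform on `ZMod N`:
`(ℱs)(k) = Σ_j s(j) exp(−2πi jk/N)`. -/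
noncomputable def discreteFourier (N : ℕ) [NeZero N] (s : ZMod N → ℂ) (k : ZMod N) : ℂ :=
  ∑ j : ZMod N,
    s j * Complex.exp (-(2 * (Real.pi : ℂ) * Complex.I * ((j.val : ℂ) * (k.val : ℂ)) / (N : ℂ)))

open ZMod Topology

lemma discreteFourier_eq_dft (N : ℕ) [NeZero N] (s : ZMod N → ℂ) :
    discreteFourier N s = 𝓕 s := by
  ext k
  rw [discreteFourier, dft_apply]
  refine sum_congr rfl fun j _ => ?_
  rw [smul_eq_mul, mul_comm]
  congr 1
  have h1 : (-(j * k) : ZMod N) = ((-(j.val * k.val : ℤ) : ℤ) : ZMod N) := by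
    simp
  rw [h1, ZMod.stdAddChar_coe]
  push_cast
  ring_nf

namespace ZMod

variable {N : ℕ} [NeZero N]

lemma dft_convolution (u v : ZMod N → ℂ) :
    𝓕 (fun g => ∑ h, u (g - h) * v h) = 𝓕 u * 𝓕 v := by
  ext k
  simp only [dft_apply, Pi.mul_apply, smul_eq_mul, mul_sum, sum_mul]
  rw [sum_comm]
  refine sum_congr rfl fun h _ => Fintype.sum_equiv (Equiv.subRight h) _ _ fun g => ?_
  rw [Equiv.subRight_apply, show -(g * k) = -((g - h) * k) + -(h * k) by ring,
    AddChar.map_add_eq_mul]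
  ring

lemma conj_dft (Φ : ZMod N → ℂ) (k : ZMod N) :
    starRingEnd ℂ (𝓕 Φ k) = 𝓕 (fun j => starRingEnd ℂ (Φ j)) (-k) := by
  simp only [dft_apply, map_sum, smul_eq_mul, map_mul, ← AddChar.map_neg_eq_conj, mul_neg, neg_neg]

lemma conj_dft_ofReal_of_even {f : ZMod N → ℝ} (hf : f.Even) (k : ZMod N) :
    starRingEnd ℂ (𝓕 (fun g => (f g : ℂ)) k) = 𝓕 (fun g => (f g : ℂ)) k := by
  simp only [conj_dft, Complex.conj_ofReal, ← congrFun (dft_comp_neg _) k, hf _]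

lemma norm_dft_le {E : Type*} [SeminormedAddCommGroup E] [NormedSpace ℂ E]
    (Φ : ZMod N → E) (k : ZMod N) : ‖𝓕 Φ k‖ ≤ ∑ j, ‖Φ j‖ := by
  rw [dft_apply]
  refine (norm_sum_le _ _).trans_eq (sum_congr rfl fun j _ => ?_)
  rw [norm_smul, AddChar.norm_apply, one_mul]

/-- A filter in the signal-processing sense (unrelated to `Filter`). -/
structure IsFilter (w : ZMod N → ℝ) : Prop where
  nonneg : ∀ g, 0 ≤ w g
  even : w.Even
  sum_eq_one : ∑ g, w g = 1

namespace IsFilter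

variable {wt : ZMod N → ℝ}

lemma exists_dft_eq_ofReal (hwt : IsFilter wt) (k : ZMod N) :
    ∃ r : ℝ, |r| ≤ 1 ∧ 𝓕 (fun g => (wt g : ℂ)) k = r := by
  refine ⟨(𝓕 (fun g => (wt g : ℂ)) k).re, ?_,
    (Complex.conj_eq_iff_re.mp (conj_dft_ofReal_of_even hwt.even k)).symm⟩
  calc |(𝓕 (fun g => (wt g : ℂ)) k).re| ≤ ‖𝓕 (fun g => (wt g : ℂ)) k‖ :=
        Complex.abs_re_le_norm _
    _ ≤ ∑ g, ‖(wt g : ℂ)‖ := norm_dft_le _ k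
    _ = 1 := by simp only [Complex.norm_real, Real.norm_of_nonneg (hwt.nonneg _), hwt.sum_eq_one]

lemma norm_one_sub_dft_conv_self_lt_one (hwt : IsFilter wt) (k : ZMod N)
    (hk : 𝓕 (fun g => ∑ h, (wt (g - h) : ℂ) * wt h) k ≠ 0) :
    ‖1 - 𝓕 (fun g => ∑ h, (wt (g - h) : ℂ) * wt h) k‖ < 1 := by
  obtain ⟨r, hr, hrk⟩ := hwt.exists_dft_eq_ofReal k
  rw [dft_convolution (fun g => (wt g : ℂ)) (fun g => (wt g : ℂ)), Pi.mul_apply, hrk] at hk ⊢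
  have hr0 : r ≠ 0 := by
    rintro rfl
    simp at hk
  have hr1 : r ^ 2 ≤ 1 := (sq_le_one_iff_abs_le_one r).2 hr
  rw [← Complex.ofReal_mul, ← Complex.ofReal_one, ← Complex.ofReal_sub, Complex.norm_real,
    Real.norm_eq_abs, abs_lt]
  constructor <;> nlinarith [sq_pos_of_ne_zero hr0]

end IsFilter

lemma dft_fluctuation (w : ZMod N → ℝ) (t : ZMod N → ℂ) :
    𝓕 (fluctuation w t) = (1 - 𝓕 (fun g => (w g : ℂ))) * 𝓕 t := by
  have h : fluctuation w t = t - fun g => ∑ h, (w (g - h) : ℂ) * t h := rfl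
  rw [h, map_sub, dft_convolution (fun g => (w g : ℂ)), sub_mul, one_mul]

lemma dft_iterate_fluctuation (w : ZMod N → ℝ) (p : ℕ) (t : ZMod N → ℂ) :
    𝓕 ((fluctuation w)^[p] t) = (1 - 𝓕 (fun g => (w g : ℂ))) ^ p * 𝓕 t := by
  induction p with
  | zero => simp
  | succ p ih => rw [Function.iterate_succ_apply', dft_fluctuation, ih, pow_succ', mul_assoc]

lemma tendsto_of_tendsto_dft {α : Type*} {l : Filter α} {f : α → ZMod N → ℂ} {a : ZMod N → ℂ}
    (h : Tendsto (fun x => 𝓕 (f x)) l (𝓝 (𝓕 a))) : Tendsto f l (𝓝 a) := by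
  have hc : Continuous (𝓕⁻ : (ZMod N → ℂ) ≃ₗ[ℂ] _) :=
    LinearMap.continuous_of_finiteDimensional (𝓕⁻ : (ZMod N → ℂ) ≃ₗ[ℂ] _).toLinearMap
  simpa [Function.comp_def] using (hc.tendsto _).comp h

end ZMod

lemma tendsto_one_sub_pow_mul {z : ℂ} (hz : z ≠ 0 → ‖1 - z‖ < 1) (c : ℂ) :
    Tendsto (fun p : ℕ => (1 - z) ^ p * c) atTop (𝓝 (if z = 0 then c else 0)) := by
  split_ifs with h
  · simp [h]
  · simpa using (tendsto_pow_atTop_nhds_zero_of_norm_lt_one (hz h)).mul_const c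

lemma tendsto_l2norm_sub {N : ℕ} [NeZero N] {α : Type*} {l : Filter α} {f : α → ZMod N → ℂ}
    {a : ZMod N → ℂ} (h : Tendsto f l (𝓝 a)) :
    Tendsto (fun x => l2norm (fun g => f x g - a g)) l (𝓝 0) := by
  have hc : Continuous (l2norm (N := N)) := by unfold l2norm; fun_prop
  simpa [l2norm, Function.comp_def] using (hc.tendsto 0).comp (tendsto_sub_nhds_zero_iff.2 h)

theorem fluctuation_iterate_tendsto_projection_general (N : ℕ) [NeZero N]
    (wt : ZMod N → ℝ)
    (hw0 : ∀ g, 0 ≤ wt g) (hwe : ∀ g, wt (-g) = wt g) (hw1 : ∑ g : ZMod N, wt g = 1)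
    (w : ZMod N → ℝ) (hw : ∀ g, w g = ∑ h : ZMod N, wt (g - h) * wt h)
    (P : (ZMod N → ℂ) →ₗ[ℂ] (ZMod N → ℂ))
    (hP : ∀ s : ZMod N → ℂ, ∀ k : ZMod N,
      discreteFourier N (P s) k =
        if discreteFourier N (fun g => (w g : ℂ)) k = 0 then discreteFourier N s k else 0)
    (s : ZMod N → ℂ) :
    Tendsto (fun p : ℕ => l2norm (fun g => (fluctuation w)^[p] s g - P s g))
      atTop (nhds 0) := by
  have hwC : (fun g => (w g : ℂ)) = fun g => ∑ h, (wt (g - h) : ℂ) * wt h := by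
    ext g
    simp [hw]
  have hPs : 𝓕 (P s) = fun k => if 𝓕 (fun g => (w g : ℂ)) k = 0 then 𝓕 s k else 0 := by
    ext k
    simpa only [discreteFourier_eq_dft] using hP s k
  refine tendsto_l2norm_sub (tendsto_of_tendsto_dft (tendsto_pi_nhds.2 fun k => ?_))
  simp only [dft_iterate_fluctuation, Pi.mul_apply, Pi.pow_apply, Pi.sub_apply, Pi.one_apply, hPs]
  refine tendsto_one_sub_pow_mul (fun hk => ?_) _
  rw [hwC] at hk ⊢
  exact (IsFilter.mk hw0 hwe hw1).norm_one_sub_dft_conv_self_lt_one k hk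

/-- For a double convolution filter `w = w̃ ⋆ w̃` on `ZMod N`,
the iterates `𝒱_w^p s` converge in Euclidean norm, as `p → ∞`, to `P s` where `P`
is the linear map defined on the Fourier side by keeping exactly the frequencies
where `ℱw` vanishes. -/
theorem fluctuation_iterate_tendsto_projection (N : ℕ) [NeZero N] (hN : 1 ≤ N)
    (wt : ZMod N → ℝ)
    (hw0 : ∀ g, 0 ≤ wt g) (hwe : ∀ g, wt (-g) = wt g) (hw1 : ∑ g : ZMod N, wt g = 1)
    (w : ZMod N → ℝ) (hw : ∀ g, w g = ∑ h : ZMod N, wt (g - h) * wt h)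
    (P : (ZMod N → ℂ) →ₗ[ℂ] (ZMod N → ℂ))
    (hP : ∀ s : ZMod N → ℂ, ∀ k : ZMod N,
      discreteFourier N (P s) k =
        if discreteFourier N (fun g => (w g : ℂ)) k = 0 then discreteFourier N s k else 0)
    (s : ZMod N → ℂ) :
    Tendsto (fun p : ℕ => l2norm (fun g => (fluctuation w)^[p] s g - P s g))
      atTop (nhds 0) :=
  fluctuation_iterate_tendsto_projection_general N wt hw0 hwe hw1 w hw P hP s
end
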